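/- System x(n+1)=A(n)x(n) has a Bohl dichotomy if and only if there exists α > 0 such that for every x₀ ∈ ℝ^d ∖ {0}, either β̄_A(x₀) ≤ −α or β̲_A(x₀) ≥ α. -/
import Mathlib


open Filter Topology

noncomputable section

abbrev Euc (d : ℕ) := EuclideanSpace ℝ (Fin d)

/-- forward product `A(m+k-1) ⋯ A(m)` -/
def fwd {d : ℕ} (A : ℕ → (Euc d →L[ℝ] Euc d)) (m : ℕ) : ℕ → (Euc d →L[ℝ] Euc d)
  | 0 => 1
  | k + 1 => A (m + k) * fwd A m k

/-- backward product `Ainv(n) ⋯ Ainv(n+k-1)` -/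
def bwd {d : ℕ} (Ainv : ℕ → (Euc d →L[ℝ] Euc d)) (n : ℕ) : ℕ → (Euc d →L[ℝ] Euc d)
  | 0 => 1
  | k + 1 => bwd Ainv n k * Ainv (n + k)

/-- transition matrix Φ_A(n,m) -/
def Phi {d : ℕ} (A Ainv : ℕ → (Euc d →L[ℝ] Euc d)) (n m : ℕ) : Euc d →L[ℝ] Euc d :=
  if m ≤ n then fwd A m (n - m) else bwd Ainv n (m - n)

/-- A is a bounded sequence of invertible maps with bounded inverse sequence Ainv -/
def IsLyapunov {d : ℕ} (A Ainv : ℕ → (Euc d →L[ℝ] Euc d)) : Prop :=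
  (∀ n, A n * Ainv n = 1) ∧ (∀ n, Ainv n * A n = 1) ∧
    BddAbove (Set.range fun n => ‖A n‖) ∧ BddAbove (Set.range fun n => ‖Ainv n‖)

/-- `‖A‖_∞ = sup_n ‖A(n)‖` -/
def supNorm {d : ℕ} (A : ℕ → (Euc d →L[ℝ] Euc d)) : ℝ := ⨆ n, ‖A n‖

/-- solution `x(n,x₀) = Φ_A(n,0) x₀` -/
def sol {d : ℕ} (A : ℕ → (Euc d →L[ℝ] Euc d)) (n : ℕ) (x₀ : Euc d) : Euc d :=
  fwd A 0 n x₀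

/-- `λ(n,m) = (1/(n-m)) ln (‖x(n,x₀)‖ / ‖x(m,x₀)‖)` -/
def lam {d : ℕ} (A : ℕ → (Euc d →L[ℝ] Euc d)) (n m : ℕ) (x₀ : Euc d) : ℝ :=
  Real.log (‖sol A n x₀‖ / ‖sol A m x₀‖) / ((n : ℝ) - (m : ℝ))

/-- upper Bohl exponent of a subspace -/
def upperBohl {d : ℕ} (A : ℕ → (Euc d →L[ℝ] Euc d)) (L : Set (Euc d)) : ℝ :=
  ⨅ N : ℕ, sSup {r | ∃ n m : ℕ, ∃ x₀ : Euc d,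
    N < n - m ∧ x₀ ∈ L ∧ x₀ ≠ 0 ∧ r = lam A n m x₀}

/-- lower Bohl exponent of a subspace -/
def lowerBohl {d : ℕ} (A : ℕ → (Euc d →L[ℝ] Euc d)) (L : Set (Euc d)) : ℝ :=
  ⨆ N : ℕ, sInf {r | ∃ n m : ℕ, ∃ x₀ : Euc d,
    N < n - m ∧ x₀ ∈ L ∧ x₀ ≠ 0 ∧ r = lam A n m x₀}

/-- upper Bohl exponent of a vector -/
def upperBohlVec {d : ℕ} (A : ℕ → (Euc d →L[ℝ] Euc d)) (x₀ : Euc d) : ℝ :=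
  ⨅ N : ℕ, sSup {r | ∃ n m : ℕ, N < n - m ∧ r = lam A n m x₀}

/-- lower Bohl exponent of a vector -/
def lowerBohlVec {d : ℕ} (A : ℕ → (Euc d →L[ℝ] Euc d)) (x₀ : Euc d) : ℝ :=
  ⨆ N : ℕ, sInf {r | ∃ n m : ℕ, N < n - m ∧ r = lam A n m x₀}

/-- Bohl spectrum -/
def bohlSpectrum {d : ℕ} (A : ℕ → (Euc d →L[ℝ] Euc d)) : Set ℝ :=
  {γ | ∃ x₀ : Euc d, x₀ ≠ 0 ∧ γ ∈ Set.Icc (lowerBohlVec A x₀) (upperBohlVec A x₀)}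

/-- the γ-shifted system `e^{-γ} A` -/
def shift {d : ℕ} (A : ℕ → (Euc d →L[ℝ] Euc d)) (γ : ℝ) : ℕ → (Euc d →L[ℝ] Euc d) :=
  fun n => Real.exp (-γ) • A n

/-- Bohl dichotomy on a given pair of subspaces -/
def HasBohlDichotomyOn {d : ℕ} (A : ℕ → (Euc d →L[ℝ] Euc d))
    (L₁ L₂ : Submodule ℝ (Euc d)) : Prop :=
  ∃ α : ℝ, 0 < α ∧ ∃ C₁ C₂ : Euc d → ℝ, (∀ x, 0 < C₁ x) ∧ (∀ x, 0 < C₂ x) ∧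
    (∀ x₀ ∈ L₁, ∀ m n : ℕ, m ≤ n →
      ‖sol A n x₀‖ ≤ C₁ x₀ * Real.exp (-α * ((n : ℝ) - (m : ℝ))) * ‖sol A m x₀‖) ∧
    (∀ x₀ ∈ L₂, ∀ m n : ℕ, m ≤ n →
      C₂ x₀ * Real.exp (α * ((n : ℝ) - (m : ℝ))) * ‖sol A m x₀‖ ≤ ‖sol A n x₀‖)

/-- Bohl dichotomy -/
def HasBohlDichotomy {d : ℕ} (A : ℕ → (Euc d →L[ℝ] Euc d)) : Prop :=
  ∃ L₁ L₂ : Submodule ℝ (Euc d), IsCompl L₁ L₂ ∧ HasBohlDichotomyOn A L₁ L₂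

/-- Bohl dichotomy spectrum -/
def bdSpectrum {d : ℕ} (A : ℕ → (Euc d →L[ℝ] Euc d)) : Set ℝ :=
  {γ | ¬ HasBohlDichotomy (shift A γ)}

namespace BohlAux

variable {d : ℕ}

lemma sol_zero (A : ℕ → (Euc d →L[ℝ] Euc d)) (x : Euc d) : sol A 0 x = x := rfl

lemma sol_succ (A : ℕ → (Euc d →L[ℝ] Euc d)) (n : ℕ) (x : Euc d) :
    sol A (n+1) x = A n (sol A n x) := by
  simp [sol, fwd, ContinuousLinearMap.mul_apply]

def MA (A : ℕ → (Euc d →L[ℝ] Euc d)) : ℝ := max (supNorm A) 1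

lemma one_le_MA (A : ℕ → (Euc d →L[ℝ] Euc d)) : 1 ≤ MA A := le_max_right _ _
lemma MA_pos (A : ℕ → (Euc d →L[ℝ] Euc d)) : 0 < MA A := lt_of_lt_of_le one_pos (one_le_MA A)
lemma log_MA_nonneg (A : ℕ → (Euc d →L[ℝ] Euc d)) : 0 ≤ Real.log (MA A) :=
  Real.log_nonneg (one_le_MA A)

lemma norm_le_MA {A : ℕ → (Euc d →L[ℝ] Euc d)}
    (hbdd : BddAbove (Set.range fun n => ‖A n‖)) (n : ℕ) : ‖A n‖ ≤ MA A :=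
  le_trans (le_ciSup hbdd n) (le_max_left _ _)

variable {A Ainv : ℕ → (Euc d →L[ℝ] Euc d)} (hA : IsLyapunov A Ainv)

include hA

lemma norm_sol_le (x : Euc d) : ∀ m n : ℕ, m ≤ n →
    ‖sol A n x‖ ≤ MA A ^ (n - m) * ‖sol A m x‖ := by
  intro m n h
  induction n, h using Nat.le_induction with
  | base => simp
  | succ n hmn ih =>
    have h1 : ‖sol A (n+1) x‖ ≤ MA A * ‖sol A n x‖ := by
      rw [sol_succ]
      exact le_trans ((A n).le_opNorm _)
        (mul_le_mul_of_nonneg_right (norm_le_MA hA.2.2.1 n) (norm_nonneg _))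
    have h2 : MA A * ‖sol A n x‖ ≤ MA A * (MA A ^ (n - m) * ‖sol A m x‖) :=
      mul_le_mul_of_nonneg_left ih (MA_pos A).le
    have h3 : n + 1 - m = (n - m) + 1 := by omega
    calc ‖sol A (n+1) x‖ ≤ MA A * (MA A ^ (n - m) * ‖sol A m x‖) := h1.trans h2
    _ = MA A ^ (n + 1 - m) * ‖sol A m x‖ := by rw [h3]; ring

lemma norm_sol_ge (x : Euc d) : ∀ m n : ℕ, m ≤ n →
    ‖sol A m x‖ ≤ MA Ainv ^ (n - m) * ‖sol A n x‖ := by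
  intro m n h
  induction n, h using Nat.le_induction with
  | base => simp
  | succ n hmn ih =>
    have hstep : ‖sol A n x‖ ≤ MA Ainv * ‖sol A (n+1) x‖ := by
      have : Ainv n (sol A (n+1) x) = sol A n x := by
        rw [sol_succ, ← ContinuousLinearMap.mul_apply, hA.2.1 n, ContinuousLinearMap.one_apply]
      rw [← this]
      exact le_trans ((Ainv n).le_opNorm _)
        (mul_le_mul_of_nonneg_right (norm_le_MA hA.2.2.2 n) (norm_nonneg _))
    have h2 : MA Ainv ^ (n - m) * ‖sol A n x‖ ≤
        MA Ainv ^ (n - m) * (MA Ainv * ‖sol A (n+1) x‖) :=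
      mul_le_mul_of_nonneg_left hstep (pow_nonneg (MA_pos Ainv).le _)
    have h3 : n + 1 - m = (n - m) + 1 := by omega
    calc ‖sol A m x‖ ≤ MA Ainv ^ (n - m) * (MA Ainv * ‖sol A (n+1) x‖) := ih.trans h2
    _ = MA Ainv ^ (n + 1 - m) * ‖sol A (n+1) x‖ := by rw [h3]; ring

lemma sol_pos {x : Euc d} (hx : x ≠ 0) (n : ℕ) : 0 < ‖sol A n x‖ := by
  have h := norm_sol_ge hA x 0 n (Nat.zero_le n)
  rw [sol_zero] at h
  have hxp : 0 < ‖x‖ := norm_pos_iff.mpr hx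
  rcases lt_or_ge 0 ‖sol A n x‖ with h' | h'
  · exact h'
  · have : ‖sol A n x‖ = 0 := le_antisymm h' (norm_nonneg _)
    rw [this, mul_zero] at h
    linarith

end BohlAux
namespace BohlAux

variable {d : ℕ} {A Ainv : ℕ → (Euc d →L[ℝ] Euc d)} (hA : IsLyapunov A Ainv)

lemma cast_sub_pos {m n : ℕ} (hmn : m < n) : (0:ℝ) < (n:ℝ) - m := by
  have : (m:ℝ) < n := by exact_mod_cast hmn
  linarith

include hA

lemma lam_le_iff {x : Euc d} (hx : x ≠ 0) {m n : ℕ} (hmn : m < n) (c : ℝ) :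
    lam A n m x ≤ c / ((n:ℝ) - m) ↔ ‖sol A n x‖ ≤ Real.exp c * ‖sol A m x‖ := by
  have hk := cast_sub_pos hmn
  have pm := sol_pos hA hx m
  have pn := sol_pos hA hx n
  rw [lam, div_le_div_iff_of_pos_right hk, Real.log_le_iff_le_exp (div_pos pn pm),
    div_le_iff₀ pm, mul_comm]

lemma le_lam_iff {x : Euc d} (hx : x ≠ 0) {m n : ℕ} (hmn : m < n) (c : ℝ) :
    c / ((n:ℝ) - m) ≤ lam A n m x ↔ Real.exp c * ‖sol A m x‖ ≤ ‖sol A n x‖ := by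
  have hk := cast_sub_pos hmn
  have pm := sol_pos hA hx m
  have pn := sol_pos hA hx n
  rw [lam, div_le_div_iff_of_pos_right hk, Real.le_log_iff_exp_le (div_pos pn pm),
    le_div_iff₀ pm, mul_comm]

omit hA in
lemma exp_cast_mul_log (B : ℝ) (hB : 0 < B) (k : ℕ) :
    Real.exp ((k:ℝ) * Real.log B) = B ^ k := by
  rw [Real.exp_nat_mul, Real.exp_log hB]

lemma lam_le_logMA {x : Euc d} (hx : x ≠ 0) {m n : ℕ} (hmn : m < n) :
    lam A n m x ≤ Real.log (MA A) := by
  have hk := cast_sub_pos hmn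
  have hcast : ((n - m : ℕ) : ℝ) = (n:ℝ) - m := Nat.cast_sub hmn.le
  have h : lam A n m x ≤ (((n:ℝ) - m) * Real.log (MA A)) / ((n:ℝ) - m) := by
    rw [lam_le_iff hA hx hmn, ← hcast, exp_cast_mul_log _ (MA_pos A)]
    exact norm_sol_le hA x m n hmn.le
  rwa [mul_comm, mul_div_assoc, div_self hk.ne', mul_one] at h

lemma neg_logMI_le_lam {x : Euc d} (hx : x ≠ 0) {m n : ℕ} (hmn : m < n) :
    -Real.log (MA Ainv) ≤ lam A n m x := by
  have hk := cast_sub_pos hmn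
  have hcast : ((n - m : ℕ) : ℝ) = (n:ℝ) - m := Nat.cast_sub hmn.le
  have h : (-(((n:ℝ) - m) * Real.log (MA Ainv))) / ((n:ℝ) - m) ≤ lam A n m x := by
    rw [le_lam_iff hA hx hmn]
    have hge := norm_sol_ge hA x m n hmn.le
    rw [Real.exp_neg, ← hcast, exp_cast_mul_log _ (MA_pos Ainv)]
    rw [inv_mul_le_iff₀ (pow_pos (MA_pos Ainv) _)]
    linarith
  rwa [neg_div, mul_comm, mul_div_assoc, div_self hk.ne', mul_one] at h

omit hA

/-- the set appearing in the Bohl exponents of a vector -/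
def SB (A : ℕ → (Euc d →L[ℝ] Euc d)) (x : Euc d) (N : ℕ) : Set ℝ :=
  {r | ∃ n m : ℕ, N < n - m ∧ r = lam A n m x}

lemma upperBohlVec_eq (A : ℕ → (Euc d →L[ℝ] Euc d)) (x : Euc d) :
    upperBohlVec A x = ⨅ N : ℕ, sSup (SB A x N) := rfl

lemma lowerBohlVec_eq (A : ℕ → (Euc d →L[ℝ] Euc d)) (x : Euc d) :
    lowerBohlVec A x = ⨆ N : ℕ, sInf (SB A x N) := rfl

lemma SB_nonempty (A : ℕ → (Euc d →L[ℝ] Euc d)) (x : Euc d) (N : ℕ) :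
    (SB A x N).Nonempty := ⟨lam A (N+1) 0 x, N+1, 0, by omega, rfl⟩

include hA

lemma SB_bddAbove {x : Euc d} (hx : x ≠ 0) (N : ℕ) : BddAbove (SB A x N) := by
  refine ⟨Real.log (MA A), ?_⟩
  rintro r ⟨n, m, hnm, rfl⟩
  exact lam_le_logMA hA hx (by omega)

lemma SB_bddBelow {x : Euc d} (hx : x ≠ 0) (N : ℕ) : BddBelow (SB A x N) := by
  refine ⟨-Real.log (MA Ainv), ?_⟩
  rintro r ⟨n, m, hnm, rfl⟩
  exact neg_logMI_le_lam hA hx (by omega)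

lemma bddBelow_sSup_SB {x : Euc d} (hx : x ≠ 0) :
    BddBelow (Set.range fun N => sSup (SB A x N)) := by
  refine ⟨-Real.log (MA Ainv), ?_⟩
  rintro r ⟨N, rfl⟩
  exact le_trans (neg_logMI_le_lam hA hx (m := 0) (n := N+1) (by omega))
    (le_csSup (SB_bddAbove hA hx N) ⟨N+1, 0, by omega, rfl⟩)

lemma bddAbove_sInf_SB {x : Euc d} (hx : x ≠ 0) :
    BddAbove (Set.range fun N => sInf (SB A x N)) := by
  refine ⟨Real.log (MA A), ?_⟩
  rintro r ⟨N, rfl⟩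
  exact le_trans (csInf_le (SB_bddBelow hA hx N) ⟨N+1, 0, by omega, rfl⟩)
    (lam_le_logMA hA hx (m := 0) (n := N+1) (by omega))

end BohlAux
namespace BohlAux

variable {d : ℕ} {A Ainv : ℕ → (Euc d →L[ℝ] Euc d)} (hA : IsLyapunov A Ainv)

include hA

/-- Lemma A: upper Bohl exponent ≤ -α gives a uniform pointwise decay estimate. -/
lemma decay_of_upper {x : Euc d} (hx : x ≠ 0) {α : ℝ} (hα : 0 < α)
    (h : upperBohlVec A x ≤ -α) :
    ∃ K : ℝ, 0 ≤ K ∧ ∀ m n : ℕ, m ≤ n →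
      ‖sol A n x‖ ≤ Real.exp (K - (α/2) * ((n:ℝ) - m)) * ‖sol A m x‖ := by
  have h2 : upperBohlVec A x < -(α/2) := lt_of_le_of_lt h (by linarith)
  rw [upperBohlVec_eq] at h2
  obtain ⟨N, hN⟩ := exists_lt_of_ciInf_lt h2
  have hLA := log_MA_nonneg A
  refine ⟨(N:ℝ) * Real.log (MA A) + (α/2) * N, by positivity, ?_⟩
  intro m n hmn
  rcases lt_or_ge N (n - m) with hbig | hsmall
  · have hmn' : m < n := by omega
    have hk := cast_sub_pos hmn'
    have hlam : lam A n m x < -(α/2) :=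
      lt_of_le_of_lt (le_csSup (SB_bddAbove hA hx N) ⟨n, m, hbig, rfl⟩) hN
    have h1 : lam A n m x ≤ (-(α/2) * ((n:ℝ) - m)) / ((n:ℝ) - m) := by
      rw [mul_div_assoc, div_self hk.ne', mul_one]; exact hlam.le
    rw [lam_le_iff hA hx hmn'] at h1
    refine h1.trans (mul_le_mul_of_nonneg_right (Real.exp_le_exp.mpr ?_) (norm_nonneg _))
    have : (0:ℝ) ≤ (N:ℝ) * Real.log (MA A) + (α/2) * N := by positivity
    linarith
  · have h1 := norm_sol_le hA x m n hmn
    have hcast : ((n - m : ℕ) : ℝ) = (n:ℝ) - m := Nat.cast_sub hmn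
    rw [← exp_cast_mul_log _ (MA_pos A), hcast] at h1
    refine h1.trans (mul_le_mul_of_nonneg_right (Real.exp_le_exp.mpr ?_) (norm_nonneg _))
    have hle : (n:ℝ) - m ≤ N := by rw [← hcast]; exact_mod_cast hsmall
    have h0 : (0:ℝ) ≤ (n:ℝ) - m := by rw [← hcast]; positivity
    nlinarith
  
/-- Lemma C: lower Bohl exponent ≥ α gives a uniform pointwise growth estimate. -/
lemma growth_of_lower {x : Euc d} (hx : x ≠ 0) {α : ℝ} (hα : 0 < α)
    (h : α ≤ lowerBohlVec A x) :
    ∃ K : ℝ, 0 ≤ K ∧ ∀ m n : ℕ, m ≤ n →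
      Real.exp ((α/2) * ((n:ℝ) - m) - K) * ‖sol A m x‖ ≤ ‖sol A n x‖ := by
  have h2 : (α/2 : ℝ) < lowerBohlVec A x := lt_of_lt_of_le (by linarith) h
  rw [lowerBohlVec_eq] at h2
  obtain ⟨N, hN⟩ := exists_lt_of_lt_ciSup h2
  have hLI := log_MA_nonneg Ainv
  refine ⟨(N:ℝ) * Real.log (MA Ainv) + (α/2) * N, by positivity, ?_⟩
  intro m n hmn
  rcases lt_or_ge N (n - m) with hbig | hsmall
  · have hmn' : m < n := by omega
    have hk := cast_sub_pos hmn'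
    have hlam : (α/2 : ℝ) < lam A n m x :=
      lt_of_lt_of_le hN (csInf_le (SB_bddBelow hA hx N) ⟨n, m, hbig, rfl⟩)
    have h1 : ((α/2) * ((n:ℝ) - m)) / ((n:ℝ) - m) ≤ lam A n m x := by
      rw [mul_div_assoc, div_self hk.ne', mul_one]; exact hlam.le
    rw [le_lam_iff hA hx hmn'] at h1
    refine le_trans (mul_le_mul_of_nonneg_right (Real.exp_le_exp.mpr ?_) (norm_nonneg _)) h1
    have : (0:ℝ) ≤ (N:ℝ) * Real.log (MA Ainv) + (α/2) * N := by positivity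
    linarith
  · have h1 := norm_sol_ge hA x m n hmn
    have hcast : ((n - m : ℕ) : ℝ) = (n:ℝ) - m := Nat.cast_sub hmn
    rw [← exp_cast_mul_log _ (MA_pos Ainv), hcast] at h1
    have hle : (n:ℝ) - m ≤ N := by rw [← hcast]; exact_mod_cast hsmall
    have h0 : (0:ℝ) ≤ (n:ℝ) - m := by rw [← hcast]; positivity
    have hexp : Real.exp ((α/2) * ((n:ℝ) - m) -
        ((N:ℝ) * Real.log (MA Ainv) + (α/2) * N)) ≤
        Real.exp (-(((n:ℝ) - m) * Real.log (MA Ainv))) := by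
      apply Real.exp_le_exp.mpr; nlinarith
    calc Real.exp ((α/2) * ((n:ℝ) - m) - ((N:ℝ) * Real.log (MA Ainv) + (α/2) * N)) *
          ‖sol A m x‖
        ≤ Real.exp (-(((n:ℝ) - m) * Real.log (MA Ainv))) * ‖sol A m x‖ :=
          mul_le_mul_of_nonneg_right hexp (norm_nonneg _)
      _ ≤ ‖sol A n x‖ := by
          rw [Real.exp_neg, inv_mul_le_iff₀ (Real.exp_pos _)]
          linarith

/-- Lemma B: a uniform pointwise decay estimate bounds the upper Bohl exponent. -/
lemma upper_of_decay {x : Euc d} (hx : x ≠ 0) {α : ℝ} (hα : 0 < α) {K : ℝ} (hK : 0 ≤ K)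
    (h : ∀ m n : ℕ, m ≤ n → ‖sol A n x‖ ≤ Real.exp (K - α * ((n:ℝ) - m)) * ‖sol A m x‖) :
    upperBohlVec A x ≤ -(α/2) := by
  obtain ⟨N, hN⟩ := exists_nat_ge (2*K/α)
  rw [upperBohlVec_eq]
  refine le_trans (ciInf_le (bddBelow_sSup_SB hA hx) N) (csSup_le (SB_nonempty A x N) ?_)
  rintro r ⟨n, m, hnm, rfl⟩
  have hmn : m < n := by omega
  have hk := cast_sub_pos hmn
  have hcast : ((n - m : ℕ) : ℝ) = (n:ℝ) - m := Nat.cast_sub hmn.le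
  have hkN : (N:ℝ) < (n:ℝ) - m := by
    rw [← hcast]; exact_mod_cast hnm
  have h1 : lam A n m x ≤ (K - α * ((n:ℝ) - m)) / ((n:ℝ) - m) :=
    (lam_le_iff hA hx hmn _).mpr (h m n hmn.le)
  refine h1.trans ?_
  rw [div_le_iff₀ hk]
  have h2K : 2*K ≤ α * N := by rw [div_le_iff₀ hα] at hN; linarith
  nlinarith

/-- Lemma D: a uniform pointwise growth estimate bounds the lower Bohl exponent. -/
lemma lower_of_growth {x : Euc d} (hx : x ≠ 0) {α : ℝ} (hα : 0 < α) {K : ℝ} (hK : 0 ≤ K)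
    (h : ∀ m n : ℕ, m ≤ n → Real.exp (α * ((n:ℝ) - m) - K) * ‖sol A m x‖ ≤ ‖sol A n x‖) :
    α/2 ≤ lowerBohlVec A x := by
  obtain ⟨N, hN⟩ := exists_nat_ge (2*K/α)
  rw [lowerBohlVec_eq]
  refine le_trans (le_csInf (SB_nonempty A x N) ?_) (le_ciSup (bddAbove_sInf_SB hA hx) N)
  rintro r ⟨n, m, hnm, rfl⟩
  have hmn : m < n := by omega
  have hk := cast_sub_pos hmn
  have hcast : ((n - m : ℕ) : ℝ) = (n:ℝ) - m := Nat.cast_sub hmn.le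
  have hkN : (N:ℝ) < (n:ℝ) - m := by
    rw [← hcast]; exact_mod_cast hnm
  have h1 : (α * ((n:ℝ) - m) - K) / ((n:ℝ) - m) ≤ lam A n m x :=
    (le_lam_iff hA hx hmn _).mpr (h m n hmn.le)
  refine le_trans ?_ h1
  rw [le_div_iff₀ hk]
  have h2K : 2*K ≤ α * N := by rw [div_le_iff₀ hα] at hN; linarith
  nlinarith

end BohlAux
namespace BohlAux

variable {d : ℕ} {A Ainv : ℕ → (Euc d →L[ℝ] Euc d)} (hA : IsLyapunov A Ainv)

lemma sol_add (A : ℕ → (Euc d →L[ℝ] Euc d)) (n : ℕ) (x y : Euc d) :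
    sol A n (x + y) = sol A n x + sol A n y := map_add _ _ _

lemma sol_smul (A : ℕ → (Euc d →L[ℝ] Euc d)) (n : ℕ) (c : ℝ) (x : Euc d) :
    sol A n (c • x) = c • sol A n x := map_smul _ _ _

lemma sol_zero_vec (A : ℕ → (Euc d →L[ℝ] Euc d)) (n : ℕ) :
    sol A n (0 : Euc d) = 0 := map_zero _

lemma lam_smul {c : ℝ} (hc : c ≠ 0) (n m : ℕ) (x : Euc d) :
    lam A n m (c • x) = lam A n m x := by
  have hcn : ‖c‖ ≠ 0 := norm_ne_zero_iff.mpr hc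
  rw [lam, lam, sol_smul, sol_smul, norm_smul, norm_smul, mul_div_mul_left _ _ hcn]

lemma SB_smul {c : ℝ} (hc : c ≠ 0) (x : Euc d) (N : ℕ) :
    SB A (c • x) N = SB A x N := by
  ext r
  constructor
  · rintro ⟨n, m, hnm, rfl⟩; exact ⟨n, m, hnm, (lam_smul hc n m x)⟩
  · rintro ⟨n, m, hnm, rfl⟩; exact ⟨n, m, hnm, (lam_smul hc n m x).symm⟩

lemma upperBohlVec_smul {c : ℝ} (hc : c ≠ 0) (x : Euc d) :
    upperBohlVec A (c • x) = upperBohlVec A x := by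
  rw [upperBohlVec_eq, upperBohlVec_eq]
  exact iInf_congr fun N => by rw [SB_smul hc]

lemma lowerBohlVec_smul {c : ℝ} (hc : c ≠ 0) (x : Euc d) :
    lowerBohlVec A (c • x) = lowerBohlVec A x := by
  rw [lowerBohlVec_eq, lowerBohlVec_eq]
  exact iSup_congr fun N => by rw [SB_smul hc]

include hA

/-- turn an eventual (m ≥ M₀) growth estimate into a uniform one. -/
lemma growth_uniformize {x : Euc d} (hx : x ≠ 0) {α : ℝ} (hα : 0 < α)
    {C : ℝ} (hC : 0 < C) (M₀ : ℕ)
    (h : ∀ m n : ℕ, M₀ ≤ m → m ≤ n → C * Real.exp (α * ((n:ℝ) - m)) * ‖sol A m x‖ ≤ ‖sol A n x‖) :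
    ∃ K : ℝ, 0 ≤ K ∧ ∀ m n : ℕ, m ≤ n →
      Real.exp (α * ((n:ℝ) - m) - K) * ‖sol A m x‖ ≤ ‖sol A n x‖ := by
  set L : ℝ := Real.log (MA Ainv) with hL
  have hL0 : 0 ≤ L := log_MA_nonneg Ainv
  set K : ℝ := max (-Real.log C) 0 + α * M₀ + (M₀:ℝ) * L with hK
  have hlogC : -Real.log C ≤ max (-Real.log C) 0 := le_max_left _ _
  have hK0 : 0 ≤ K := by positivity
  have hαM : (0:ℝ) ≤ α * (M₀:ℝ) := by positivity
  have hML : (0:ℝ) ≤ (M₀:ℝ) * L := by positivity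
  refine ⟨K, hK0, ?_⟩
  intro m n hmn
  -- general helper: ‖sol m‖ ≤ exp((n'-m')L)‖sol n‖ for m' ≤ n'
  have hdown : ∀ m' n' : ℕ, m' ≤ n' →
      ‖sol A m' x‖ ≤ Real.exp (((n':ℝ) - m') * L) * ‖sol A n' x‖ := by
    intro m' n' hm'
    have h1 := norm_sol_ge hA x m' n' hm'
    rwa [← exp_cast_mul_log _ (MA_pos Ainv), Nat.cast_sub hm'] at h1
  have hCe : ∀ t : ℝ, C * Real.exp t = Real.exp (Real.log C + t) := by
    intro t; rw [Real.exp_add, Real.exp_log hC]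
  rcases le_or_gt M₀ m with h1 | h1
  · have := h m n h1 hmn
    rw [hCe] at this
    refine le_trans (mul_le_mul_of_nonneg_right (Real.exp_le_exp.mpr ?_) (norm_nonneg _)) this
    linarith
  · rcases le_or_gt M₀ n with h2 | h2
    · -- m < M₀ ≤ n
      have hgrow := h M₀ n le_rfl h2
      have hmM : ‖sol A m x‖ ≤ Real.exp (((M₀:ℝ) - m) * L) * ‖sol A M₀ x‖ :=
        hdown m M₀ h1.le
      have hM0pos := sol_pos hA hx M₀
      have hsolM : Real.exp (-(((M₀:ℝ) - m) * L)) * ‖sol A m x‖ ≤ ‖sol A M₀ x‖ := by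
        rw [Real.exp_neg, inv_mul_le_iff₀ (Real.exp_pos _)]
        linarith [hmM]
      have step : C * Real.exp (α * ((n:ℝ) - M₀)) * (Real.exp (-(((M₀:ℝ) - m) * L)) * ‖sol A m x‖)
          ≤ ‖sol A n x‖ := by
        refine le_trans (mul_le_mul_of_nonneg_left hsolM (by positivity)) hgrow
      rw [hCe, ← mul_assoc, ← Real.exp_add] at step
      refine le_trans (mul_le_mul_of_nonneg_right (Real.exp_le_exp.mpr ?_) (norm_nonneg _)) step
      -- α(n-m) - K ≤ log C + α(n-M₀) + (-((M₀-m)L))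
      have hm0 : (0:ℝ) ≤ (M₀:ℝ) - m := by
        have : (m:ℝ) ≤ M₀ := by exact_mod_cast h1.le
        linarith
      have hmM0 : (M₀:ℝ) - m ≤ M₀ := by
        have : (0:ℝ) ≤ m := Nat.cast_nonneg m
        linarith
      linarith [mul_le_mul_of_nonneg_right hmM0 hL0, mul_le_mul_of_nonneg_left hmM0 hα.le]
    · -- n < M₀
      have hmn' := hdown m n hmn
      have hnpos := sol_pos hA hx n
      have hsol : Real.exp (-(((n:ℝ) - m) * L)) * ‖sol A m x‖ ≤ ‖sol A n x‖ := by
        rw [Real.exp_neg, inv_mul_le_iff₀ (Real.exp_pos _)]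
        linarith [hmn']
      refine le_trans (mul_le_mul_of_nonneg_right (Real.exp_le_exp.mpr ?_) (norm_nonneg _)) hsol
      have h0 : (0:ℝ) ≤ (n:ℝ) - m := by
        have : (m:ℝ) ≤ n := by exact_mod_cast hmn
        linarith
      have hnM : (n:ℝ) - m ≤ M₀ := by
        have h3 : (n:ℝ) ≤ M₀ := by exact_mod_cast h2.le
        have h4 : (0:ℝ) ≤ m := Nat.cast_nonneg m
        linarith
      linarith [mul_le_mul_of_nonneg_right hnM hL0, mul_le_mul_of_nonneg_left hnM hα.le, le_max_right (-Real.log C) (0:ℝ)]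

end BohlAux
namespace BohlAux

variable {d : ℕ} {A Ainv : ℕ → (Euc d →L[ℝ] Euc d)} (hA : IsLyapunov A Ainv)

include hA

/-- the stable set is closed under addition, given the spectral dichotomy condition -/
lemma stable_add {α : ℝ} (hα : 0 < α)
    (hcond : ∀ x₀ : Euc d, x₀ ≠ 0 → (upperBohlVec A x₀ ≤ -α ∨ α ≤ lowerBohlVec A x₀))
    {a b : Euc d} (ha : a = 0 ∨ upperBohlVec A a ≤ -α)
    (hb : b = 0 ∨ upperBohlVec A b ≤ -α) :
    a + b = 0 ∨ upperBohlVec A (a + b) ≤ -α := by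
  rcases ha with rfl | ha
  · rw [zero_add]; exact hb
  rcases hb with rfl | hb
  · rw [add_zero]; exact Or.inr ha
  by_cases ha0 : a = 0
  · rw [ha0, zero_add]; exact Or.inr hb
  by_cases hb0 : b = 0
  · rw [hb0, add_zero]; exact Or.inr ha
  by_cases hz0 : a + b = 0
  · exact Or.inl hz0
  rcases hcond (a + b) hz0 with hup | hlow
  · exact Or.inr hup
  exfalso
  obtain ⟨Ka, hKa0, hKa⟩ := decay_of_upper hA ha0 hα ha
  obtain ⟨Kb, hKb0, hKb⟩ := decay_of_upper hA hb0 hα hb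
  obtain ⟨Kz, hKz0, hKz⟩ := growth_of_lower hA hz0 hα hlow
  have hz : 0 < ‖a + b‖ := norm_pos_iff.mpr hz0
  set R0 : ℝ := Real.exp Ka * ‖a‖ + Real.exp Kb * ‖b‖ with hR0
  have hR0pos : 0 < R0 := by
    have := norm_pos_iff.mpr ha0
    have := Real.exp_pos Ka
    have := Real.exp_pos Kb
    have := norm_nonneg b
    positivity
  obtain ⟨n, hn⟩ := exists_nat_gt ((Kz + Real.log (R0/‖a + b‖ + 1)) / (α/2))
  have hhalf : (0:ℝ) < α/2 := by linarith
  have hbig : Kz + Real.log (R0/‖a + b‖ + 1) < (α/2) * n := by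
    rw [div_lt_iff₀ hhalf] at hn; linarith
  -- lower bound on ‖sol n (a+b)‖
  have hlow' := hKz 0 n (Nat.zero_le n)
  rw [sol_zero] at hlow'
  simp only [Nat.cast_zero, sub_zero] at hlow'
  -- upper bounds
  have hupa := hKa 0 n (Nat.zero_le n)
  have hupb := hKb 0 n (Nat.zero_le n)
  rw [sol_zero] at hupa hupb
  simp only [Nat.cast_zero, sub_zero] at hupa hupb
  have htri : ‖sol A n (a + b)‖ ≤ ‖sol A n a‖ + ‖sol A n b‖ := by
    rw [sol_add]; exact norm_add_le _ _
  have hexpa : Real.exp (Ka - α/2 * n) ≤ Real.exp Ka := by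
    apply Real.exp_le_exp.mpr
    have : (0:ℝ) ≤ α/2 * n := by positivity
    linarith
  have hexpb : Real.exp (Kb - α/2 * n) ≤ Real.exp Kb := by
    apply Real.exp_le_exp.mpr
    have : (0:ℝ) ≤ α/2 * n := by positivity
    linarith
  have hRHS : ‖sol A n (a + b)‖ ≤ R0 := by
    calc ‖sol A n (a + b)‖ ≤ ‖sol A n a‖ + ‖sol A n b‖ := htri
      _ ≤ Real.exp (Ka - α/2 * n) * ‖a‖ + Real.exp (Kb - α/2 * n) * ‖b‖ := by
          exact add_le_add hupa hupb
      _ ≤ R0 := add_le_add (mul_le_mul_of_nonneg_right hexpa (norm_nonneg _))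
          (mul_le_mul_of_nonneg_right hexpb (norm_nonneg _))
  have hLHS : R0 < Real.exp (α/2 * n - Kz) * ‖a + b‖ := by
    have h1 : R0/‖a + b‖ + 1 ≤ Real.exp (α/2 * n - Kz) := by
      have hpos : (0:ℝ) < R0/‖a + b‖ + 1 := by positivity
      rw [← Real.exp_log hpos]
      apply Real.exp_le_exp.mpr
      linarith
    calc R0 < (R0/‖a + b‖ + 1) * ‖a + b‖ := by
          rw [add_mul, div_mul_cancel₀ _ hz.ne', one_mul]; linarith
      _ ≤ Real.exp (α/2 * n - Kz) * ‖a + b‖ :=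
          mul_le_mul_of_nonneg_right h1 (norm_nonneg _)
  linarith

end BohlAux
set_option maxHeartbeats 1000000 in
open BohlAux in
theorem stmt18 {d : ℕ} (A Ainv : ℕ → (Euc d →L[ℝ] Euc d)) (hA : IsLyapunov A Ainv) :
    HasBohlDichotomy A ↔
      ∃ α : ℝ, 0 < α ∧ ∀ x₀ : Euc d, x₀ ≠ 0 →
        (upperBohlVec A x₀ ≤ -α ∨ α ≤ lowerBohlVec A x₀) := by
  classical
  constructor
  · rintro ⟨L₁, L₂, hcompl, α, hα, C₁, C₂, hC₁, hC₂, hdec, hgro⟩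
    refine ⟨α/2, by linarith, ?_⟩
    intro x₀ hx₀
    have hx₀' : x₀ ∈ L₁ ⊔ L₂ := by rw [hcompl.sup_eq_top]; trivial
    obtain ⟨u, hu, v, hv, huv⟩ := Submodule.mem_sup.mp hx₀'
    by_cases hv0 : v = 0
    · left
      have hx₁ : x₀ ∈ L₁ := by rw [← huv, hv0, add_zero]; exact hu
      have hCpos := hC₁ x₀
      set K : ℝ := max (Real.log (C₁ x₀)) 0 with hKdef
      have hK0 : (0:ℝ) ≤ K := le_max_right _ _
      have hb : ∀ m n : ℕ, m ≤ n →
          ‖sol A n x₀‖ ≤ Real.exp (K - α * ((n:ℝ) - m)) * ‖sol A m x₀‖ := by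
        intro m n hmn
        refine le_trans (hdec x₀ hx₁ m n hmn) ?_
        refine mul_le_mul_of_nonneg_right ?_ (norm_nonneg _)
        rw [show K - α*((n:ℝ)-m) = K + (-α*((n:ℝ)-m)) by ring, Real.exp_add]
        refine mul_le_mul_of_nonneg_right ?_ (Real.exp_pos _).le
        calc C₁ x₀ = Real.exp (Real.log (C₁ x₀)) := (Real.exp_log hCpos).symm
          _ ≤ Real.exp K := Real.exp_le_exp.mpr (le_max_left _ _)
      exact upper_of_decay hA hx₀ hα hK0 hb
    · right
      have hu' : ∀ m n : ℕ, m ≤ n →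
          ‖sol A n u‖ ≤ C₁ u * Real.exp (-α * ((n:ℝ) - m)) * ‖sol A m u‖ :=
        fun m n hmn => hdec u hu m n hmn
      have hv' : ∀ m n : ℕ, m ≤ n →
          C₂ v * Real.exp (α * ((n:ℝ) - m)) * ‖sol A m v‖ ≤ ‖sol A n v‖ :=
        fun m n hmn => hgro v hv m n hmn
      have hc1 := hC₁ u
      have hc2 := hC₂ v
      have hbpos : ∀ m : ℕ, 0 < ‖sol A m v‖ := sol_pos hA hv0
      have hvnorm : (0:ℝ) < ‖v‖ := norm_pos_iff.mpr hv0
      set R : ℝ := (C₁ u * ‖u‖) / (C₂ v * ‖v‖) with hRdef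
      have hR0 : (0:ℝ) ≤ R := by positivity
      have hratio : ∀ m : ℕ, ‖sol A m u‖ ≤ R * Real.exp (-(2*α) * m) * ‖sol A m v‖ := by
        intro m
        have h1 := hu' 0 m (Nat.zero_le m)
        have h2 := hv' 0 m (Nat.zero_le m)
        rw [sol_zero] at h1 h2
        simp only [Nat.cast_zero, sub_zero] at h1 h2
        set E : ℝ := Real.exp (α * (m:ℝ)) with hEdef
        have hE : (0:ℝ) < E := Real.exp_pos _
        have e1 : Real.exp (-α * (m:ℝ)) = E⁻¹ := by
          rw [hEdef, ← Real.exp_neg]; congr 1; ring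
        have e2 : Real.exp (-(2*α) * (m:ℝ)) = E⁻¹ * E⁻¹ := by
          rw [hEdef, ← Real.exp_neg, ← Real.exp_add]; congr 1; ring
        have key : R * Real.exp (-(2*α) * (m:ℝ)) * (C₂ v * E * ‖v‖)
            = C₁ u * Real.exp (-α * (m:ℝ)) * ‖u‖ := by
          rw [e1, e2, hRdef]
          field_simp
        calc ‖sol A m u‖ ≤ C₁ u * Real.exp (-α * (m:ℝ)) * ‖u‖ := h1
          _ = R * Real.exp (-(2*α) * (m:ℝ)) * (C₂ v * E * ‖v‖) := key.symm
          _ ≤ R * Real.exp (-(2*α) * (m:ℝ)) * ‖sol A m v‖ := by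
              refine mul_le_mul_of_nonneg_left ?_ (by positivity)
              rw [hEdef]; exact h2
      set ε : ℝ := min 1 (C₂ v / (2 * C₁ u)) with hεdef
      have hε0 : (0:ℝ) < ε := lt_min one_pos (by positivity)
      have h2α : (0:ℝ) < 2*α := by linarith
      obtain ⟨M₀, hM₀⟩ := exists_nat_gt (Real.log (R/ε + 1) / (2*α))
      have hM1 : Real.log (R/ε + 1) < 2*α*M₀ := by
        rw [div_lt_iff₀ h2α] at hM₀; linarith
      have hRe : R * Real.exp (-(2*α) * (M₀:ℝ)) ≤ ε := by
        have hpos : (0:ℝ) < R/ε + 1 := by positivity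
        have hle : R/ε + 1 ≤ Real.exp (2*α*M₀) := by
          rw [← Real.exp_log hpos]; exact Real.exp_le_exp.mpr hM1.le
        have hmul := mul_le_mul_of_nonneg_right hle hε0.le
        rw [add_mul, div_mul_cancel₀ _ hε0.ne', one_mul] at hmul
        have hinv : Real.exp (-(2*α) * (M₀:ℝ)) = (Real.exp (2*α*(M₀:ℝ)))⁻¹ := by
          rw [← Real.exp_neg]; congr 1; ring
        rw [hinv, mul_inv_le_iff₀ (Real.exp_pos _)]
        linarith [hmul]
      have hgrow : ∀ m n : ℕ, M₀ ≤ m → m ≤ n →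
          (C₂ v / 4) * Real.exp (α * ((n:ℝ) - m)) * ‖sol A m x₀‖ ≤ ‖sol A n x₀‖ := by
        intro m n hM hmn
        have ht0 : (0:ℝ) ≤ (n:ℝ) - m := by
          have : (m:ℝ) ≤ n := by exact_mod_cast hmn
          linarith
        have hbm := hbpos m
        have ham : ‖sol A m u‖ ≤ ε * ‖sol A m v‖ := by
          refine le_trans (hratio m) ?_
          refine mul_le_mul_of_nonneg_right ?_ (hbpos m).le
          refine le_trans ?_ hRe
          refine mul_le_mul_of_nonneg_left (Real.exp_le_exp.mpr ?_) hR0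
          have hMm : (M₀:ℝ) ≤ m := by exact_mod_cast hM
          linarith [mul_le_mul_of_nonneg_left hMm h2α.le]
        have hεle : C₁ u * ε ≤ C₂ v / 2 := by
          have hm := min_le_right 1 (C₂ v / (2 * C₁ u))
          calc C₁ u * ε ≤ C₁ u * (C₂ v / (2 * C₁ u)) :=
                mul_le_mul_of_nonneg_left hm hc1.le
            _ = C₂ v / 2 := by field_simp
        have han : ‖sol A n u‖ ≤ C₂ v / 2 * ‖sol A m v‖ := by
          have hdecu := hu' m n hmn
          have e1 : Real.exp (-α * ((n:ℝ) - m)) ≤ 1 := by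
            rw [Real.exp_le_one_iff]; nlinarith [mul_nonneg hα.le ht0]
          calc ‖sol A n u‖ ≤ C₁ u * Real.exp (-α * ((n:ℝ) - m)) * ‖sol A m u‖ := hdecu
            _ ≤ C₁ u * 1 * (ε * ‖sol A m v‖) := by
                refine mul_le_mul (mul_le_mul_of_nonneg_left e1 hc1.le) ham
                  (norm_nonneg _) (by positivity)
            _ = C₁ u * ε * ‖sol A m v‖ := by ring
            _ ≤ C₂ v / 2 * ‖sol A m v‖ := mul_le_mul_of_nonneg_right hεle hbm.le
        have hbn := hv' m n hmn
        have hE1 : 1 ≤ Real.exp (α * ((n:ℝ) - m)) := Real.one_le_exp (by positivity)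
        have hxm : ‖sol A m x₀‖ ≤ ‖sol A m u‖ + ‖sol A m v‖ := by
          rw [← huv, sol_add]; exact norm_add_le _ _
        have hxn : ‖sol A n v‖ - ‖sol A n u‖ ≤ ‖sol A n x₀‖ := by
          have hveq : sol A n v = sol A n x₀ - sol A n u := by
            rw [← huv, sol_add]; abel
          have := norm_sub_le (sol A n x₀) (sol A n u)
          rw [← hveq] at this
          linarith
        have hεle1 : ε ≤ 1 := min_le_left _ _
        have s1 : ‖sol A m x₀‖ ≤ 2 * ‖sol A m v‖ := by
          linarith [mul_le_mul_of_nonneg_right hεle1 hbm.le]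
        have s2 := mul_le_mul_of_nonneg_left s1
          (by positivity : (0:ℝ) ≤ C₂ v / 4 * Real.exp (α * ((n:ℝ) - m)))
        have s3 : C₂ v / 2 * Real.exp (α * ((n:ℝ) - m)) * ‖sol A m v‖ ≤ ‖sol A n x₀‖ := by
          have h4 := mul_nonneg (mul_nonneg hc2.le (sub_nonneg.mpr hE1)) hbm.le
          nlinarith [h4]
        linarith [s2, s3]
      obtain ⟨K, hK0, hKu⟩ := growth_uniformize hA hx₀ hα
        (by positivity : (0:ℝ) < C₂ v / 4) M₀ hgrow
      exact lower_of_growth hA hx₀ hα hK0 hKu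
  · rintro ⟨α, hα, hcond⟩
    have hhalf : (0:ℝ) < α/2 := by linarith
    let S₁ : Set (Euc d) := {x | x = 0 ∨ upperBohlVec A x ≤ -α}
    have hsmul : ∀ (c : ℝ) {x : Euc d}, x ∈ S₁ → c • x ∈ S₁ := by
      intro c x hx
      by_cases hc : c = 0
      · exact Or.inl (by rw [hc, zero_smul])
      rcases hx with rfl | hx
      · exact Or.inl (by rw [smul_zero])
      · exact Or.inr (by rw [upperBohlVec_smul hc]; exact hx)
    let L₁ : Submodule ℝ (Euc d) :=
      ⟨⟨⟨S₁, fun ha hb => stable_add hA hα hcond ha hb⟩, Or.inl rfl⟩, hsmul⟩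
    obtain ⟨L₂, hcompl⟩ := Submodule.exists_isCompl L₁
    have hmem₁ : ∀ y : Euc d, y ∈ L₁ ↔ (y = 0 ∨ upperBohlVec A y ≤ -α) := fun y => Iff.rfl
    refine ⟨L₁, L₂, hcompl, α/2, hhalf, ?_⟩
    refine ⟨fun x => if h : x ≠ 0 ∧ upperBohlVec A x ≤ -α then
        Real.exp (Classical.choose (decay_of_upper hA h.1 hα h.2)) else 1,
      fun x => if h : x ≠ 0 ∧ α ≤ lowerBohlVec A x then
        Real.exp (-(Classical.choose (growth_of_lower hA h.1 hα h.2))) else 1,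
      ?_, ?_, ?_, ?_⟩
    · intro x; dsimp only; split <;> [exact Real.exp_pos _; exact one_pos]
    · intro x; dsimp only; split <;> [exact Real.exp_pos _; exact one_pos]
    · -- decay on L₁
      intro x hx m n hmn
      rcases (hmem₁ x).mp hx with rfl | hup
      · simp [sol_zero_vec]
      by_cases hx0 : x = 0
      · subst hx0; simp [sol_zero_vec]
      dsimp only
      rw [dif_pos ⟨hx0, hup⟩]
      obtain ⟨hK0, hK⟩ := Classical.choose_spec (decay_of_upper hA hx0 hα hup)
      refine le_trans (hK m n hmn) (le_of_eq ?_)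
      rw [← Real.exp_add]
      congr 2
      ring
    · -- growth on L₂
      intro x hx m n hmn
      by_cases hx0 : x = 0
      · subst hx0; simp [sol_zero_vec]
      have hnot : ¬ (upperBohlVec A x ≤ -α) := by
        intro hcontra
        have hx1 : x ∈ L₁ := (hmem₁ x).mpr (Or.inr hcontra)
        exact hx0 (Submodule.disjoint_def.mp hcompl.disjoint x hx1 hx)
      have hlow : α ≤ lowerBohlVec A x := (hcond x hx0).resolve_left hnot
      dsimp only
      rw [dif_pos ⟨hx0, hlow⟩]
      obtain ⟨hK0, hK⟩ := Classical.choose_spec (growth_of_lower hA hx0 hα hlow)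
      refine le_trans (le_of_eq ?_) (hK m n hmn)
      rw [← Real.exp_add]
      congr 2
      ring
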